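/- Let A be a Novikov algebra over a commutative ring K, let R : A → A be a derivation (R(a∘b) = R(a)∘b + a∘R(b)) satisfying a∘R(b) = b∘R(a) for all a,b ∈ A, and let π : A → K be a K-linear functional with π(R(a)) = 0 for all a ∈ A. Define ϑ : A × A → K by ϑ(a,b) = π(a∘R(b)). Then ϑ is symmetric (ϑ(a,b) = ϑ(b,a)) and is a right-symmetric 2-cocycle with trivial coefficients: ϑ(a∘b, c) − ϑ(a∘c, b) − ϑ(a, [b,c]) = 0 for all a,b,c ∈ A, where [b,c] = b∘c − c∘b. -/

import Mathlib

/-! Write `[b,c] = b∘c − c∘b`. Expanding `R[b,c]` by the Leibniz rule and applying right-symmetry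
twice gives `(a∘b)∘Rc − (a∘c)∘Rb − a∘R[b,c] = (a∘Rc)∘b − (a∘Rb)∘c`, which by `a∘Rb = b∘Ra` is
`(c∘Ra)∘b − (b∘Ra)∘c`. In any Novikov algebra `(c∘x)∘b − (b∘x)∘c = −(x∘[b,c] + [b,c]∘x)`, so the
cocycle expression is `−π(Ra∘[b,c] + [b,c]∘Ra)`. Finally `π(Rx∘y + y∘Rx) = π(Rx∘y + x∘Ry) = π(R(x∘y)) = 0`. -/

section

variable {K A : Type*} [CommSemiring K] [AddCommGroup A] [Module K A]
  (mul : A →ₗ[K] A →ₗ[K] A)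

theorem novikov_mul_mul_sub_mul_mul
    (hrs : ∀ a b c : A,
      mul (mul a b) c - mul a (mul b c) = mul (mul a c) b - mul a (mul c b))
    (hnov : ∀ a b c : A, mul a (mul b c) = mul b (mul a c)) (x b c : A) :
    mul (mul c x) b - mul (mul b x) c
      = -(mul x (mul b c - mul c b) + mul (mul b c - mul c b) x) := by
  simp only [map_sub, LinearMap.sub_apply]
  linear_combination (norm := module) hrs c x b - hrs b x c + hnov c x b - hnov b x c
    - hnov c b x

theorem rightSymm_mul_map_sub_mul_map
    (hrs : ∀ a b c : A,
      mul (mul a b) c - mul a (mul b c) = mul (mul a c) b - mul a (mul c b))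
    (R : A →ₗ[K] A) (hder : ∀ a b : A, R (mul a b) = mul (R a) b + mul a (R b)) (a b c : A) :
    mul (mul a b) (R c) - mul (mul a c) (R b) - mul a (R (mul b c - mul c b))
      = mul (mul a (R c)) b - mul (mul a (R b)) c := by
  simp only [map_sub, hder, map_add]
  linear_combination (norm := module) hrs a b (R c) - hrs a c (R b)

theorem map_mul_map_add_mul_map_eq_zero (R : A →ₗ[K] A)
    (hder : ∀ a b : A, R (mul a b) = mul (R a) b + mul a (R b))
    (hsym : ∀ a b : A, mul a (R b) = mul b (R a))
    (π : A →ₗ[K] K) (hπ : ∀ a : A, π (R a) = 0) (x y : A) :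
    π (mul (R x) y + mul y (R x)) = 0 := by
  rw [hsym y x, ← hder, hπ]

end

theorem novikov_central_extension_cocycle
    {K A : Type*} [CommRing K] [AddCommGroup A] [Module K A]
    (mul : A →ₗ[K] A →ₗ[K] A)
    (hrs : ∀ a b c : A,
      mul (mul a b) c - mul a (mul b c) = mul (mul a c) b - mul a (mul c b))
    (hnov : ∀ a b c : A, mul a (mul b c) = mul b (mul a c))
    (R : A →ₗ[K] A)
    (hder : ∀ a b : A, R (mul a b) = mul (R a) b + mul a (R b))
    (hsym : ∀ a b : A, mul a (R b) = mul b (R a))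
    (π : A →ₗ[K] K)
    (hπ : ∀ a : A, π (R a) = 0) :
    (∀ a b : A, π (mul a (R b)) = π (mul b (R a))) ∧
    (∀ a b c : A,
      π (mul (mul a b) (R c)) - π (mul (mul a c) (R b))
        - π (mul a (R (mul b c - mul c b))) = 0) := by
  refine ⟨fun a b => by rw [hsym], fun a b c => ?_⟩
  have cocycle_eq : mul (mul a b) (R c) - mul (mul a c) (R b) - mul a (R (mul b c - mul c b))
      = -(mul (R a) (mul b c - mul c b) + mul (mul b c - mul c b) (R a)) := by
    rw [rightSymm_mul_map_sub_mul_map mul hrs R hder, hsym a c, hsym a b,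
      novikov_mul_mul_sub_mul_mul mul hrs hnov]
  rw [← map_sub, ← map_sub, cocycle_eq, map_neg,
    map_mul_map_add_mul_map_eq_zero mul R hder hsym π hπ, neg_zero]
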